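/- Flag correctness of merge: let c ≥ 1, let f⃗ be a list of formulas, let a_1,…,a_c be abstract values, and let σ be an assignment such that the bit string obtained by evaluating f⃗ under σ has a prefix in S_c with numeric_c of that string equal to k. Then for every index i with 1 ≤ i ≤ |flags(a_k)|, the i-th flag g_i of merge_c(f⃗, a_1,…,a_c) satisfies g_i(σ) = flags_i(a_k)(σ). -/

import Mathlib

/-- Abstract values over propositional variables `V`: a list of (semantic) formulas
(the *flags*) together with a list of abstract values (the *arguments*). -/
inductive AVal (V : Type) : Type where
  | mk : List ((V → Bool) → Bool) → List (AVal V) → AVal V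

/-- The flags of an abstract value. -/
def AVal.flags {V : Type} : AVal V → List ((V → Bool) → Bool)
  | .mk f _ => f

/-- The arguments of an abstract value. -/
def AVal.args {V : Type} : AVal V → List (AVal V)
  | .mk _ a => a

/-- A signature: every type symbol `T` gets a nonempty finite list of constructors,
each given by its finite list of argument type symbols. -/
structure Signature (τ : Type) where
  ctors : τ → List (List τ)
  ctors_ne : ∀ T, ctors T ≠ []

/-- Untyped data terms; the first component is the (1-based) rank of the
constructor. -/
inductive Value : Type where
  | mk : ℕ → List Value → Value

/-- Well-typed concrete values of type `T`: `C_i(v_1, …, v_n)` where `C_i` is the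
`i`-th constructor of `T` with argument types `T_1, …, T_n` and each `v_j` is a
well-typed value of type `T_j`. -/
inductive WT {τ : Type} (sig : Signature τ) : τ → Value → Prop where
  | mk {T : τ} {i : ℕ} {argTys : List τ} {vals : List Value} :
      1 ≤ i → (sig.ctors T)[i - 1]? = some argTys →
      List.Forall₂ (WT sig) argTys vals → WT sig T (.mk i vals)

/-- `numeric n w = some i` iff `w` has a (unique) prefix `u ∈ S n` of lexicographic
rank `i` in `S n`; extra bits beyond the prefix are ignored. -/
def numeric : ℕ → List Bool → Option ℕ
  | 0, _ => none
  | 1, _ => some 1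
  | _ + 2, [] => none
  | n + 2, false :: w => numeric ((n + 2 + 1) / 2) w
  | n + 2, true :: w => (numeric ((n + 2) / 2) w).map (fun i => (n + 2 + 1) / 2 + i)
termination_by n _ => n
decreasing_by all_goals omega

/-- `strOf n i` is the element of `S n` of lexicographic rank `i` (for `1 ≤ i ≤ n`). -/
def strOf : ℕ → ℕ → List Bool
  | 0, _ => []
  | 1, _ => []
  | n + 2, i =>
      if i ≤ (n + 2 + 1) / 2 then false :: strOf ((n + 2 + 1) / 2) i
      else true :: strOf ((n + 2) / 2) (i - (n + 2 + 1) / 2)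
termination_by n _ => n
decreasing_by all_goals omega
mutual
  /-- Encoding of a concrete value of type `T` as an abstract value: the flags are
  constant formulas representing the rank-`i` element of `S c(T)`, and the arguments
  are the encodings of the constructor arguments at their respective types. -/
  def encode {V τ : Type} (sig : Signature τ) : τ → Value → AVal V
    | T, .mk i vals =>
        .mk ((strOf (sig.ctors T).length i).map (fun b => fun _ => b))
          (encodeList sig ((sig.ctors T).getD (i - 1) []) vals)
  termination_by _ v => sizeOf v

  /-- Pointwise encoding of a list of values at a list of types. -/
  def encodeList {V τ : Type} (sig : Signature τ) : List τ → List Value → List (AVal V)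
    | t :: ts, v :: vs => encode sig t v :: encodeList sig ts vs
    | _, _ => []
  termination_by _ vs => sizeOf vs
end

mutual
  /-- Decoding of an abstract value at type `T` under an assignment `σ` (a partial
  function): the flags are evaluated under `σ`; if the resulting bit string has a
  prefix in `S c(T)` determining constructor rank `i` of `T`, and there are enough
  arguments, the first arguments are decoded at the argument types of the `i`-th
  constructor of `T`; otherwise decoding is undefined. -/
  def decode {V τ : Type} (sig : Signature τ) : τ → AVal V → (V → Bool) → Option Value
    | T, .mk flags args, σ =>
        match numeric (sig.ctors T).length (flags.map (fun f => f σ)) with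
        | none => none
        | some i =>
            match (sig.ctors T)[i - 1]? with
            | none => none
            | some argTys =>
                if argTys.length ≤ args.length then
                  (decodeList sig argTys args σ).map (Value.mk i)
                else none
  termination_by _ a _ => sizeOf a

  /-- Pointwise decoding of (a prefix of) a list of abstract values at a list of
  types. -/
  def decodeList {V τ : Type} (sig : Signature τ) :
      List τ → List (AVal V) → (V → Bool) → Option (List Value)
    | [], _, _ => some []
    | _ :: _, [], _ => none
    | t :: ts, a :: as, σ =>
        match decode sig t a σ with
        | none => none
        | some v => (decodeList sig ts as σ).map (fun vs => v :: vs)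
  termination_by _ as _ => sizeOf as
end
lemma AVal.one_le_sizeOf_list {V : Type} (l : List (AVal V)) : 1 ≤ sizeOf l := by
  cases l <;> simp <;> omega

lemma AVal.sizeOf_getD_le {V : Type} (a : AVal V) (j : ℕ) :
    sizeOf (a.args.getD j (AVal.mk [] [])) ≤ sizeOf a := by
  cases a with
  | mk f args =>
      simp only [AVal.args]
      by_cases h : j < args.length
      · have hm : args.getD j (AVal.mk [] []) ∈ args := by
          rw [List.getD_eq_getElem _ _ h]; exact List.getElem_mem h
        have := List.sizeOf_lt_of_mem hm
        simp only [AVal.mk.sizeOf_spec]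
        have := AVal.one_le_sizeOf_list (V := V) []
        omega
      · rw [List.getD_eq_default _ _ (by omega)]
        simp only [AVal.mk.sizeOf_spec]
        have h1 : 1 ≤ sizeOf f := by cases f <;> simp <;> omega
        have h2 := AVal.one_le_sizeOf_list args
        have h3 := AVal.one_le_sizeOf_list (V := V) []
        simp at h3 ⊢
        omega

lemma AVal.sizeOf_getD_lt {V : Type} (a : AVal V) (j : ℕ) (h : j < a.args.length) :
    sizeOf (a.args.getD j (AVal.mk [] [])) < sizeOf a := by
  cases a with
  | mk f args =>
      simp only [AVal.args] at h ⊢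
      have hm : args.getD j (AVal.mk [] []) ∈ args := by
        rw [List.getD_eq_getElem _ _ h]; exact List.getElem_mem h
      have := List.sizeOf_lt_of_mem hm
      simp only [AVal.mk.sizeOf_spec]
      omega

lemma merge_dec {V : Type} (as : List (AVal V)) (j : ℕ)
    (hj : j < (as.map (fun a => a.args.length)).foldr max 0) :
    sizeOf (as.map (fun a => a.args.getD j (AVal.mk [] []))) < sizeOf as := by
  induction as with
  | nil => simp at hj
  | cons a as ih =>
      simp only [List.map_cons, List.foldr_cons] at hj
      simp only [List.map_cons, List.cons.sizeOf_spec]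
      rcases Nat.lt_or_ge j a.args.length with h | h
      · have h1 := AVal.sizeOf_getD_lt a j h
        have h2 : sizeOf (as.map (fun a => a.args.getD j (AVal.mk [] []))) ≤ sizeOf as := by
          rcases Nat.lt_or_ge j ((as.map (fun a => a.args.length)).foldr max 0) with h' | h'
          · exact Nat.le_of_lt (ih h')
          · clear ih hj; induction as with
            | nil => simp
            | cons b bs ihb =>
                simp only [List.map_cons, List.foldr_cons] at h' ⊢
                simp only [List.cons.sizeOf_spec]
                have := AVal.sizeOf_getD_le b j
                have := ihb (by omega)
                omega
        omega
      · have hj' : j < (as.map (fun a => a.args.length)).foldr max 0 := by omega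
        have := ih hj'
        have := AVal.sizeOf_getD_le a j
        omega

/-- The combining function `merge c f⃗ [a_1, …, a_c]`: its `i`-th flag is the
conjunction over `k` of the implications `numeric c f⃗ = k ⟹ flags_i(a_k)`, and its
`j`-th argument is `merge c f⃗` of the `j`-th arguments of the `a_k` (a missing
argument being the empty abstract value). -/
def merge {V : Type} (c : ℕ) (fs : List ((V → Bool) → Bool)) (as : List (AVal V)) :
    AVal V :=
  AVal.mk
    ((List.range ((as.map (fun a => a.flags.length)).foldr max 0)).map
      (fun i => fun σ =>
        match numeric c (fs.map (fun f => f σ)) with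
        | none => true
        | some k =>
            match as[k - 1]? with
            | none => true
            | some a =>
                match a.flags[i]? with
                | none => true
                | some g => g σ))
    ((List.range ((as.map (fun a => a.args.length)).foldr max 0)).attach.map
      (fun j => merge c fs (as.map (fun a => a.args.getD j.1 (AVal.mk [] [])))))
termination_by sizeOf as
decreasing_by
  simpa [List.map_attach_eq_pmap] using merge_dec as j.1 (by simpa using j.2)

lemma flags_merge {V : Type} (c : ℕ) (fs : List ((V → Bool) → Bool)) (as : List (AVal V)) :
    (merge c fs as).flags =
      (List.range ((as.map (fun a => a.flags.length)).foldr max 0)).map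
        (fun i σ =>
          match numeric c (fs.map (fun f => f σ)) with
          | none => true
          | some k =>
              match as[k - 1]? with
              | none => true
              | some a =>
                  match a.flags[i]? with
                  | none => true
                  | some g => g σ) := by
  rw [merge, AVal.flags]

lemma length_flags_le_length_flags_merge {V : Type} (c : ℕ) (fs : List ((V → Bool) → Bool))
    {as : List (AVal V)} {a : AVal V} (ha : a ∈ as) :
    a.flags.length ≤ (merge c fs as).flags.length := by
  rw [flags_merge, List.length_map, List.length_range]
  exact List.le_max_of_le' 0 (List.mem_map_of_mem ha) le_rfl

lemma merge_flags_getElem_apply {V : Type} {c : ℕ} {fs : List ((V → Bool) → Bool)}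
    {as : List (AVal V)} {σ : V → Bool} {k : ℕ}
    (hk : numeric c (fs.map (fun f => f σ)) = some k)
    {ak : AVal V} (hak : as[k - 1]? = some ak)
    {i : ℕ} (hi : i < (merge c fs as).flags.length) (hik : i < ak.flags.length) :
    (merge c fs as).flags[i] σ = ak.flags[i] σ := by
  rw [List.getElem_of_eq (flags_merge c fs as)]
  simp only [List.getElem_map, List.getElem_range, hk, hak,
    List.getElem?_eq_getElem hik]

/-- Flag correctness of `merge`: if evaluating the flags `fs` under `σ` yields a bit
string with a prefix in `S c` of rank `k`, then for every index `i` below the number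
of flags of `a_k`, the `i`-th flag of `merge c fs [a_1, …, a_c]` evaluates under `σ`
to the same truth value as the `i`-th flag of `a_k`. -/
theorem merge_flags_correct {V : Type} (c : ℕ) (hc : 1 ≤ c)
    (fs : List ((V → Bool) → Bool)) (as : List (AVal V)) (hlen : as.length = c)
    (σ : V → Bool) (k : ℕ)
    (hk : numeric c (fs.map (fun f => f σ)) = some k)
    (ak : AVal V) (hak : as[k - 1]? = some ak)
    (i : ℕ) (hi : i < ak.flags.length) :
    ((merge c fs as).flags.getD i (fun _ => true)) σ =
      (ak.flags.getD i (fun _ => true)) σ := by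
  have hmerge : i < (merge c fs as).flags.length :=
    hi.trans_le (length_flags_le_length_flags_merge c fs (List.mem_of_getElem? hak))
  rw [List.getD_eq_getElem _ _ hmerge, List.getD_eq_getElem _ _ hi]
  exact merge_flags_getElem_apply hk hak hmerge hi
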